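/- arXiv:1201.5976 — 2 statements merged into one kernel-verified Lean document; each statement's English description precedes it below -/
import Mathlib

section
/- If Θ ∈ H^∞_{M_n} is an inner matrix function and Φ ∈ L^∞_{M_n}, then H_Φ^* H_Φ − H_{ΘΦ}^* H_{ΘΦ} = H_Φ^* H_{Θ*} H_{Θ*}^* H_Φ. -/
open MeasureTheory Complex Real InnerProductSpace Submodule

set_option maxHeartbeats 1000000
set_option synthInstance.maxHeartbeats 200000

noncomputable section

namespace BlockToeplitz

instance fact2pi : Fact (0 < 2 * π) := ⟨by positivity⟩

/-- The unit circle, as the additive circle `ℝ / 2πℤ`. -/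
abbrev 𝕋 : Type := AddCircle (2 * π)

/-- Normalized Haar (Lebesgue) measure on the circle. -/
abbrev μ𝕋 : Measure 𝕋 := AddCircle.haarAddCircle

section Pointwise

variable {E F : Type*} [NormedAddCommGroup E] [NormedSpace ℂ E]
  [NormedAddCommGroup F] [NormedSpace ℂ F]

theorem memLp_pointwise {Φ : 𝕋 → (E →L[ℂ] F)} (hm : AEStronglyMeasurable Φ μ𝕋)
    {C : ℝ} (hC : ∀ x, ‖Φ x‖ ≤ C) (f : Lp E 2 μ𝕋) :
    MemLp (fun x => Φ x (f x)) 2 μ𝕋 := by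
  refine MemLp.of_le_mul (c := C) (Lp.memLp f) ?_ ?_
  · exact isBoundedBilinearMap_apply.continuous.comp_aestronglyMeasurable
      (hm.prodMk (Lp.aestronglyMeasurable f))
  · refine Filter.Eventually.of_forall fun x => ?_
    exact (ContinuousLinearMap.le_opNorm _ _).trans
      (mul_le_mul_of_nonneg_right (hC x) (norm_nonneg _))

/-- The operator on `L²` of pointwise application of a uniformly bounded family of
operators (e.g. multiplication by an `L^∞` matrix function). -/
def pointwiseCLM (Φ : 𝕋 → (E →L[ℂ] F)) (hm : AEStronglyMeasurable Φ μ𝕋)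
    {C : ℝ} (hC : ∀ x, ‖Φ x‖ ≤ C) : Lp E 2 μ𝕋 →L[ℂ] Lp F 2 μ𝕋 :=
  LinearMap.mkContinuous
    { toFun := fun f => (memLp_pointwise hm hC f).toLp _
      map_add' := fun f g => by
        rw [← MemLp.toLp_add (memLp_pointwise hm hC f) (memLp_pointwise hm hC g)]
        refine MemLp.toLp_congr _ _ ?_
        filter_upwards [Lp.coeFn_add f g] with x hx
        simp only [hx, Pi.add_apply, map_add]
      map_smul' := fun c f => by
        try dsimp only
        try rw [RingHom.id_apply]
        rw [← MemLp.toLp_const_smul c (memLp_pointwise hm hC f)]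
        refine MemLp.toLp_congr _ _ ?_
        filter_upwards [Lp.coeFn_smul c f] with x hx
        simp only [hx, Pi.smul_apply, ContinuousLinearMap.map_smul] }
    (max C 0)
    (by
      intro f
      simp only [LinearMap.coe_mk, AddHom.coe_mk]
      rw [Lp.norm_toLp]
      have hb : eLpNorm (fun x => Φ x (f x)) 2 μ𝕋
          ≤ ENNReal.ofReal (max C 0) * eLpNorm (f : 𝕋 → E) 2 μ𝕋 := by
        refine eLpNorm_le_mul_eLpNorm_of_ae_le_mul ?_ 2
        refine Filter.Eventually.of_forall fun x => ?_
        exact (ContinuousLinearMap.le_opNorm _ _).trans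
          (mul_le_mul_of_nonneg_right ((hC x).trans (le_max_left _ _)) (norm_nonneg _))
      calc (eLpNorm (fun x => Φ x (f x)) 2 μ𝕋).toReal
          ≤ (ENNReal.ofReal (max C 0) * eLpNorm (f : 𝕋 → E) 2 μ𝕋).toReal := by
            refine ENNReal.toReal_mono ?_ hb
            exact ENNReal.mul_ne_top ENNReal.ofReal_ne_top (Lp.eLpNorm_ne_top f)
        _ = max C 0 * ‖f‖ := by
            rw [ENNReal.toReal_mul, ENNReal.toReal_ofReal (le_max_right C 0), Lp.norm_def])

@[simp] theorem pointwiseCLM_apply (Φ : 𝕋 → (E →L[ℂ] F)) (hm : AEStronglyMeasurable Φ μ𝕋)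
    {C : ℝ} (hC : ∀ x, ‖Φ x‖ ≤ C) (f : Lp E 2 μ𝕋) :
    pointwiseCLM Φ hm hC f = (memLp_pointwise hm hC f).toLp _ := rfl

end Pointwise

end BlockToeplitz

namespace BlockToeplitz
open scoped ComplexConjugate

variable {ι : Type} [Fintype ι]

/-- `ℂ^ι`. -/
abbrev V (ι : Type) [Fintype ι] : Type := EuclideanSpace ℂ ι

/-- The space `L²(𝕋, ℂ^ι)`. -/
abbrev L2 (ι : Type) [Fintype ι] : Type := Lp (V ι) 2 μ𝕋

/-- The vector-valued trigonometric monomial `z^k ⊗ e_i` as an element of `L²`. -/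
def fourierV (ι : Type) [Fintype ι] [DecidableEq ι] (k : ℤ) (i : ι) : L2 ι :=
  (ContinuousMap.toLp (E := V ι) 2 μ𝕋 ℂ)
    ⟨fun x => fourier k x • EuclideanSpace.single i 1,
      (map_continuous (fourier k)).smul continuous_const⟩

/-- The span of the analytic-negative monomials. -/
def negSpan (ι : Type) [Fintype ι] : Submodule ℂ (L2 ι) :=
  Submodule.span ℂ
    {f | ∃ k : ℤ, k < 0 ∧ ∃ i : ι, f = @fourierV ι _ (Classical.decEq ι) k i}

/-- The vector-valued Hardy space `H²(𝕋, ℂ^ι)`, i.e. the orthogonal complement in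
`L²` of the span of the monomials `z^k ⊗ e_i`, `k < 0`. -/
def hardy (ι : Type) [Fintype ι] : Submodule ℂ (L2 ι) := (negSpan ι)ᗮ

/-- The Hardy space as a Hilbert space. -/
abbrev H2 (ι : Type) [Fintype ι] : Type := ↥(hardy ι)

instance : CompleteSpace (H2 ι) := by
  unfold H2 hardy; infer_instance

instance : HasOrthogonalProjection (hardy ι) := by
  unfold hardy; infer_instance

/-- The orthogonal projection `P` of `L²` onto `H²`. -/
def hardyProj (ι : Type) [Fintype ι] : L2 ι →L[ℂ] H2 ι :=
  orthogonalProjection (hardy ι)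

/-- A matrix-valued `L^∞` function on the circle (the matrices being identified with the
operators on `ℂ^ι` that they induce): a bounded measurable family of operators. -/
structure Symbol (ι : Type) [Fintype ι] : Type where
  toFun : 𝕋 → (V ι →L[ℂ] V ι)
  meas : AEStronglyMeasurable toFun μ𝕋
  bound : ℝ
  le_bound : ∀ x, ‖toFun x‖ ≤ bound

instance : CoeFun (Symbol ι) (fun _ => 𝕋 → (V ι →L[ℂ] V ι)) := ⟨Symbol.toFun⟩

/-- The multiplication operator `f ↦ Φ f` on `L²(𝕋, ℂ^ι)`. -/
def Symbol.mulLp (Φ : Symbol ι) : L2 ι →L[ℂ] L2 ι :=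
  pointwiseCLM Φ.toFun Φ.meas Φ.le_bound

/-- Pointwise product (composition) of two matrix symbols. -/
def Symbol.mul (Φ Ψ : Symbol ι) : Symbol ι where
  toFun := fun x => (Φ x).comp (Ψ x)
  meas := isBoundedBilinearMap_comp.continuous.comp_aestronglyMeasurable
    (Φ.meas.prodMk Ψ.meas)
  bound := max Φ.bound 0 * max Ψ.bound 0
  le_bound := fun x => (ContinuousLinearMap.opNorm_comp_le _ _).trans <|
    mul_le_mul ((Φ.le_bound x).trans (le_max_left _ _))
      ((Ψ.le_bound x).trans (le_max_left _ _)) (norm_nonneg _) (le_max_right _ _)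

/-- The pointwise adjoint symbol `Φ*` (conjugate transpose). -/
def Symbol.star (Φ : Symbol ι) : Symbol ι where
  toFun := fun x => ContinuousLinearMap.adjoint (Φ x)
  meas := (ContinuousLinearMap.adjoint (𝕜 := ℂ) (E := V ι)
      (F := V ι)).continuous.comp_aestronglyMeasurable Φ.meas
  bound := Φ.bound
  le_bound := fun x =>
    le_trans
      (le_of_eq ((ContinuousLinearMap.adjoint (𝕜 := ℂ) (E := V ι) (F := V ι)).norm_map (Φ.toFun x)))
      (Φ.le_bound x)

end BlockToeplitz

namespace BlockToeplitz
open scoped ComplexConjugate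

theorem norm_fourier_apply (k : ℤ) (x : 𝕋) : ‖fourier k x‖ = 1 := by
  rw [fourier_apply]; exact Circle.norm_coe _

section CompNeg

variable {E : Type*} [NormedAddCommGroup E] [NormedSpace ℂ E]

/-- The composition operator `f(z) ↦ f(z̄)` (i.e. `x ↦ -x` on the additive circle)
on `L²`. -/
def compNeg (E : Type*) [NormedAddCommGroup E] [NormedSpace ℂ E] :
    Lp E 2 μ𝕋 →L[ℂ] Lp E 2 μ𝕋 :=
  LinearMap.mkContinuous
    { toFun := fun f =>
        Lp.compMeasurePreserving (E := E) (p := 2) Neg.neg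
          (Measure.measurePreserving_neg μ𝕋) f
      map_add' := fun f g => by
        exact map_add (Lp.compMeasurePreserving Neg.neg (Measure.measurePreserving_neg μ𝕋)) f g
      map_smul' := fun c f => by
        apply Lp.ext
        have h1 := Lp.coeFn_compMeasurePreserving (μ := μ𝕋) (c • f)
          (Measure.measurePreserving_neg μ𝕋)
        have h2 := Lp.coeFn_compMeasurePreserving (μ := μ𝕋) f
          (Measure.measurePreserving_neg μ𝕋)
        have h3 : ((c • f : Lp E 2 μ𝕋) : 𝕋 → E) ∘ Neg.neg
            =ᵐ[μ𝕋] ((c • (f : 𝕋 → E)) ∘ Neg.neg) :=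
          (Measure.measurePreserving_neg μ𝕋).quasiMeasurePreserving.ae_eq_comp
            (Lp.coeFn_smul c f)
        filter_upwards [h1, h3,
          Lp.coeFn_smul c (Lp.compMeasurePreserving (E := E) (p := 2) Neg.neg
            (Measure.measurePreserving_neg μ𝕋) f), h2]
          with x hx1 hx3 hx4 hx2
        rw [RingHom.id_apply, hx1, hx3, hx4]
        show c • (f : 𝕋 → E) (-x)
            = c • (Lp.compMeasurePreserving (E := E) (p := 2) Neg.neg
                (Measure.measurePreserving_neg μ𝕋) f : 𝕋 → E) x
        rw [hx2]
        rfl }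
    1
    (fun f => by
      simpa using (Lp.norm_compMeasurePreserving (E := E) (p := 2) f
        (Measure.measurePreserving_neg μ𝕋)).le)

/-- The unitary operator `J f (z) = z̄ f(z̄)` on `L²`. -/
def Jop (E : Type*) [NormedAddCommGroup E] [NormedSpace ℂ E] :
    Lp E 2 μ𝕋 →L[ℂ] Lp E 2 μ𝕋 :=
  (pointwiseCLM (fun x => (fourier (-1) x : ℂ) • (1 : E →L[ℂ] E))
      (((map_continuous (fourier (-1))).smul continuous_const).aestronglyMeasurable)
      (C := 1)
      (fun x => by
        show ‖(fourier (-1)) x • (1 : E →L[ℂ] E)‖ ≤ 1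
        rw [norm_smul ((fourier (-1)) x) (1 : E →L[ℂ] E), norm_fourier_apply, one_mul,
          ContinuousLinearMap.one_def]
        exact ContinuousLinearMap.norm_id_le)).comp (compNeg E)

end CompNeg

end BlockToeplitz

namespace BlockToeplitz
open scoped ComplexConjugate

variable {ι : Type} [Fintype ι]

/-- The pointwise transposed-conjugated-reflected symbol `Φ̃(z) := Φ(z̄)*`. -/
def Symbol.tilde (Φ : Symbol ι) : Symbol ι where
  toFun := fun x => ContinuousLinearMap.adjoint (Φ.toFun (-x))
  meas := (ContinuousLinearMap.adjoint (𝕜 := ℂ) (E := V ι)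
      (F := V ι)).continuous.comp_aestronglyMeasurable
    (Φ.meas.comp_quasiMeasurePreserving
      (Measure.measurePreserving_neg μ𝕋).quasiMeasurePreserving)
  bound := Φ.bound
  le_bound := fun x =>
    le_trans
      (le_of_eq
        ((ContinuousLinearMap.adjoint (𝕜 := ℂ) (E := V ι) (F := V ι)).norm_map (Φ.toFun (-x))))
      (Φ.le_bound (-x))

/-- A matrix symbol belongs to `H^∞` iff multiplication by it leaves the Hardy space
invariant. -/
def Symbol.MemHinf (Φ : Symbol ι) : Prop :=
  ∀ f : L2 ι, f ∈ hardy ι → Φ.mulLp f ∈ hardy ι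

/-- A matrix `H^∞` symbol is inner if `Θ(z)*Θ(z) = I` a.e. -/
def Symbol.IsInner (Φ : Symbol ι) : Prop :=
  Φ.MemHinf ∧ ∀ᵐ x ∂μ𝕋, (ContinuousLinearMap.adjoint (Φ.toFun x)).comp (Φ.toFun x) = 1

/-- The block Toeplitz operator `T_Φ = P (Φ ·)` on the vector Hardy space. -/
def toeplitz (Φ : Symbol ι) : H2 ι →L[ℂ] H2 ι :=
  (hardyProj ι).comp (Φ.mulLp.comp (hardy ι).subtypeL)

/-- The block Hankel operator `H_Φ = J P^⊥ (Φ ·)`, viewed as an operator from `H²` to `H²`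
(its image indeed lies in `H²`). -/
def hankel (Φ : Symbol ι) : H2 ι →L[ℂ] H2 ι :=
  (hardyProj ι).comp <|
    (Jop (V ι)).comp <|
      (ContinuousLinearMap.id ℂ (L2 ι) - (hardy ι).subtypeL.comp (hardyProj ι)).comp <|
        Φ.mulLp.comp (hardy ι).subtypeL

/-- The image `Θ · H²` of the Hardy space under multiplication by a symbol. -/
def Symbol.rangeH2 (Φ : Symbol ι) : Submodule ℂ (L2 ι) :=
  (hardy ι).map (Φ.mulLp : L2 ι →ₗ[ℂ] L2 ι)

/-- The model space `H(Θ) := H² ⊖ Θ H²`. -/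
def modelSpace (Θ : Symbol ι) : Submodule ℂ (L2 ι) :=
  hardy ι ⊓ (Θ.rangeH2)ᗮ

/-- A scalar-valued `L^∞` function on the circle. -/
structure SymbolS : Type where
  toFun : 𝕋 → ℂ
  meas : AEStronglyMeasurable toFun μ𝕋
  bound : ℝ
  le_bound : ∀ x, ‖toFun x‖ ≤ bound

instance : CoeFun SymbolS (fun _ => 𝕋 → ℂ) := ⟨SymbolS.toFun⟩

/-- Scalar symbols embed into matrix symbols as `φ I_n`. -/
def SymbolS.toMatrix (φ : SymbolS) (ι : Type) [Fintype ι] : Symbol ι where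
  toFun := fun x => φ.toFun x • (1 : V ι →L[ℂ] V ι)
  meas := φ.meas.smul aestronglyMeasurable_const
  bound := φ.bound
  le_bound := fun x => by
    have h0 : (0 : ℝ) ≤ φ.bound := le_trans (norm_nonneg _) (φ.le_bound 0)
    calc ‖φ.toFun x • (1 : V ι →L[ℂ] V ι)‖ ≤ ‖φ.toFun x‖ * ‖(1 : V ι →L[ℂ] V ι)‖ :=
          ContinuousLinearMap.opNorm_smul_le _ _
      _ ≤ φ.bound * 1 := by
          refine mul_le_mul (φ.le_bound x) ?_ (norm_nonneg _) h0
          rw [ContinuousLinearMap.one_def]; exact ContinuousLinearMap.norm_id_le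
      _ = φ.bound := mul_one _

/-- The scalar-valued `L²` space of the circle. -/
abbrev L2S : Type := Lp ℂ 2 μ𝕋

/-- The span of the negative trigonometric monomials. -/
def negSpanS : Submodule ℂ L2S :=
  Submodule.span ℂ {f | ∃ k : ℤ, k < 0 ∧ f = fourierLp 2 k}

/-- The scalar Hardy space `H²(𝕋)`. -/
def hardyS : Submodule ℂ L2S := negSpanSᗮ

/-- The scalar Hardy space as a Hilbert space. -/
abbrev H2S : Type := ↥hardyS

instance : CompleteSpace H2S := by unfold H2S hardyS; infer_instance

instance : HasOrthogonalProjection hardyS := by unfold hardyS; infer_instance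

/-- The Szegő (Riesz) projection `P : L² → H²`. -/
def hardyProjS : L2S →L[ℂ] H2S := orthogonalProjection hardyS

/-- Multiplication by a scalar `L^∞` function, as an operator on `L²(𝕋)`. -/
def SymbolS.mulLp (φ : SymbolS) : L2S →L[ℂ] L2S :=
  pointwiseCLM (fun x => φ.toFun x • (1 : ℂ →L[ℂ] ℂ))
    (φ.meas.smul aestronglyMeasurable_const)
    (C := φ.bound)
    (fun x => by
      calc ‖φ.toFun x • (1 : ℂ →L[ℂ] ℂ)‖ ≤ ‖φ.toFun x‖ * ‖(1 : ℂ →L[ℂ] ℂ)‖ :=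
            ContinuousLinearMap.opNorm_smul_le _ _
        _ = ‖φ.toFun x‖ := by rw [norm_one, mul_one]
        _ ≤ φ.bound := φ.le_bound x)

/-- The scalar Toeplitz operator `T_φ` on `H²`. -/
def toeplitzS (φ : SymbolS) : H2S →L[ℂ] H2S :=
  hardyProjS.comp (φ.mulLp.comp hardyS.subtypeL)

/-- The scalar Hankel operator `H_φ = J P^⊥ (φ ·)` on `H²`. -/
def hankelS (φ : SymbolS) : H2S →L[ℂ] H2S :=
  hardyProjS.comp <|
    (Jop ℂ).comp <|
      (ContinuousLinearMap.id ℂ L2S - hardyS.subtypeL.comp hardyProjS).comp <|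
        φ.mulLp.comp hardyS.subtypeL

/-- Pointwise product of scalar symbols. -/
def SymbolS.mul (φ ψ : SymbolS) : SymbolS where
  toFun := fun x => φ.toFun x * ψ.toFun x
  meas := φ.meas.mul ψ.meas
  bound := max φ.bound 0 * max ψ.bound 0
  le_bound := fun x => by
    rw [norm_mul]
    exact mul_le_mul ((φ.le_bound x).trans (le_max_left _ _))
      ((ψ.le_bound x).trans (le_max_left _ _)) (norm_nonneg _) (le_max_right _ _)

/-- The complex-conjugate symbol `φ̄`. -/
def SymbolS.conj (φ : SymbolS) : SymbolS where
  toFun := fun x => conj (φ.toFun x)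
  meas := Complex.continuous_conj.comp_aestronglyMeasurable φ.meas
  bound := φ.bound
  le_bound := fun x => le_trans (le_of_eq (RCLike.norm_conj _)) (φ.le_bound x)

/-- The reflected conjugate symbol `φ̃(z) := conj (φ(z̄))`. -/
def SymbolS.tilde (φ : SymbolS) : SymbolS where
  toFun := fun x => conj (φ.toFun (-x))
  meas := Complex.continuous_conj.comp_aestronglyMeasurable
    (φ.meas.comp_quasiMeasurePreserving
      (Measure.measurePreserving_neg μ𝕋).quasiMeasurePreserving)
  bound := φ.bound
  le_bound := fun x => le_trans (le_of_eq (RCLike.norm_conj _)) (φ.le_bound (-x))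

/-- A scalar symbol is in `H^∞` iff multiplication by it preserves `H²`. -/
def SymbolS.MemHinf (φ : SymbolS) : Prop :=
  ∀ f : L2S, f ∈ hardyS → φ.mulLp f ∈ hardyS

/-- A scalar inner function: an `H^∞` function which is unimodular a.e. on the circle. -/
def SymbolS.IsInner (φ : SymbolS) : Prop :=
  φ.MemHinf ∧ ∀ᵐ x ∂μ𝕋, ‖φ.toFun x‖ = 1

/-- The image `θ · H²` of the Hardy space under a scalar multiplication operator. -/
def SymbolS.rangeH2 (φ : SymbolS) : Submodule ℂ L2S :=
  hardyS.map (φ.mulLp : L2S →ₗ[ℂ] L2S)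

/-- The scalar model space `H(θ) = H² ⊖ θH²`. -/
def modelSpaceS (θ : SymbolS) : Submodule ℂ L2S :=
  hardyS ⊓ (θ.rangeH2)ᗮ

/-- The coordinate function `z` on the circle (i.e. `x ↦ e^{ix}`). -/
def circleCoord : 𝕋 → ℂ := fun x => fourier 1 x

/-- The symbol `z` of the unilateral shift. -/
def shiftSymbolS : SymbolS where
  toFun := circleCoord
  meas := (map_continuous (fourier 1)).aestronglyMeasurable
  bound := 1
  le_bound := fun x => le_of_eq (norm_fourier_apply 1 x)

/-- The symbol `z̄`. -/
def coshiftSymbolS : SymbolS where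
  toFun := fun x => fourier (-1) x
  meas := (map_continuous (fourier (-1))).aestronglyMeasurable
  bound := 1
  le_bound := fun x => le_of_eq (norm_fourier_apply (-1) x)

/-- An operator on a complex Hilbert space is hyponormal if its self-commutator
`[T*, T] = T*T - TT*` is a positive operator. -/
def Hyponormal {H : Type*} [NormedAddCommGroup H] [InnerProductSpace ℂ H] [CompleteSpace H]
    (T : H →L[ℂ] H) : Prop :=
  (ContinuousLinearMap.adjoint T ∘L T - T ∘L ContinuousLinearMap.adjoint T).IsPositive

/-- A Blaschke factor `b_a(z) = (z - a)/(1 - āz)`. -/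
def blaschke (a z : ℂ) : ℂ := (z - a) / (1 - conj a * z)

end BlockToeplitz

namespace BlockToeplitz

/-!
Write `P` and `Q = 1 - P` for the orthogonal projections of `L²` onto `H²` and `(H²)ᗮ`.
Since the flip `J` is unitary and maps `(H²)ᗮ` into `H²`, `⟪H_Φ f, H_Ψ g⟫ = ⟪Q(Φf), Q(Ψg)⟫`;
testing against `H²` then identifies `H_{Θ*}^* H_Φ f` with `P(Θ Q(Φf))`.
As `Θ` maps `H²` into itself, `Q(ΘΦf) = Q(Θ Q(Φf))`, and as `Θ` is an isometry of `L²`,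
`⟪Q(Φf), Q(Φg)⟫ = ⟪P(Θ Q(Φf)), P(Θ Q(Φg))⟫ + ⟪Q(Θ Q(Φf)), Q(Θ Q(Φg))⟫`: this is the identity.
-/

open scoped ComplexConjugate

section Reflection

variable {E : Type*} [NormedAddCommGroup E] [InnerProductSpace ℂ E]

theorem coeFn_Jop (u : Lp E 2 μ𝕋) :
    Jop E u =ᵐ[μ𝕋] fun x => fourier (-1) x • u (-x) := by
  rw [Jop, ContinuousLinearMap.comp_apply, pointwiseCLM_apply]
  refine (MemLp.coeFn_toLp _).trans ?_
  filter_upwards [Lp.coeFn_compMeasurePreserving u (Measure.measurePreserving_neg μ𝕋)]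
    with x hx
  change fourier (-1) x • (1 : E →L[ℂ] E) (Lp.compMeasurePreserving Neg.neg _ u x) = _
  rw [hx]
  rfl

theorem inner_Jop_Jop (u v : Lp E 2 μ𝕋) : ⟪Jop E u, Jop E v⟫_ℂ = ⟪u, v⟫_ℂ := by
  rw [L2.inner_def, L2.inner_def, ← integral_neg_eq_self (fun x => ⟪u x, v x⟫_ℂ)]
  refine integral_congr_ae ?_
  filter_upwards [coeFn_Jop u, coeFn_Jop v] with x hu hv
  rw [hu, hv, inner_smul_left, inner_smul_right, ← mul_assoc, ← fourier_neg, ← fourier_add]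
  simp

end Reflection

section Projection

variable {𝕜 E : Type*} [RCLike 𝕜] [NormedAddCommGroup E] [InnerProductSpace 𝕜 E]
  (K : Submodule 𝕜 E) [K.HasOrthogonalProjection]

theorem _root_.Submodule.inner_starProjection_starProjection (x y : E) :
    ⟪K.starProjection x, K.starProjection y⟫_𝕜 = ⟪K.starProjection x, y⟫_𝕜 := by
  rw [inner_starProjection_left_eq_right,
    starProjection_eq_self_iff.mpr (starProjection_apply_mem _ _),
    inner_starProjection_left_eq_right]

theorem _root_.Submodule.inner_starProjection_add_inner_starProjection_orthogonal (x y : E) :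
    ⟪K.starProjection x, K.starProjection y⟫_𝕜 + ⟪Kᗮ.starProjection x, Kᗮ.starProjection y⟫_𝕜
      = ⟪x, y⟫_𝕜 := by
  rw [K.inner_starProjection_starProjection, Kᗮ.inner_starProjection_starProjection,
    ← inner_add_left, starProjection_add_starProjection_orthogonal]

end Projection

section Hardy

variable {ι : Type} [Fintype ι]

namespace Symbol

theorem coeFn_mulLp (Φ : Symbol ι) (u : L2 ι) : Φ.mulLp u =ᵐ[μ𝕋] fun x => Φ x (u x) :=
  MemLp.coeFn_toLp (memLp_pointwise Φ.meas Φ.le_bound u)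

theorem mulLp_mul_apply (Θ Φ : Symbol ι) (u : L2 ι) :
    (Θ.mul Φ).mulLp u = Θ.mulLp (Φ.mulLp u) := by
  refine Lp.ext ?_
  filter_upwards [(Θ.mul Φ).coeFn_mulLp u, Θ.coeFn_mulLp (Φ.mulLp u), Φ.coeFn_mulLp u]
    with x hΘΦ hΘ hΦ
  rw [hΘΦ, hΘ, hΦ]
  rfl

theorem inner_mulLp_left (Φ : Symbol ι) (u v : L2 ι) :
    ⟪Φ.mulLp u, v⟫_ℂ = ⟪u, Φ.star.mulLp v⟫_ℂ := by
  rw [L2.inner_def, L2.inner_def]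
  refine integral_congr_ae ?_
  filter_upwards [Φ.coeFn_mulLp u, Φ.star.coeFn_mulLp v] with x hu hv
  rw [hu, hv, ← ContinuousLinearMap.adjoint_inner_right]
  rfl

theorem IsInner.inner_mulLp_mulLp {Θ : Symbol ι} (hΘ : Θ.IsInner) (u v : L2 ι) :
    ⟪Θ.mulLp u, Θ.mulLp v⟫_ℂ = ⟪u, v⟫_ℂ := by
  rw [L2.inner_def, L2.inner_def]
  refine integral_congr_ae ?_
  filter_upwards [Θ.coeFn_mulLp u, Θ.coeFn_mulLp v, hΘ.2] with x hu hv hx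
  rw [hu, hv, ← ContinuousLinearMap.adjoint_inner_right, ← ContinuousLinearMap.comp_apply,
    hx, one_apply_eq_self]

end Symbol

section Monomials

variable [DecidableEq ι]

theorem coeFn_fourierV (k : ℤ) (i : ι) :
    fourierV ι k i =ᵐ[μ𝕋] fun x => fourier k x • EuclideanSpace.single i (1 : ℂ) :=
  ContinuousMap.coeFn_toLp (E := V ι) (𝕜 := ℂ) (p := 2) (μ := μ𝕋) _

theorem Jop_fourierV (k : ℤ) (i : ι) : Jop (V ι) (fourierV ι k i) = fourierV ι (-1 - k) i := by
  refine Lp.ext ?_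
  filter_upwards [coeFn_Jop (fourierV ι k i),
    (Measure.measurePreserving_neg μ𝕋).quasiMeasurePreserving.ae_eq_comp (coeFn_fourierV k i),
    coeFn_fourierV (-1 - k) i] with x hJ hneg h
  have hk : fourier k (-x) = fourier (-k) x := by
    rw [fourier_apply, fourier_apply, smul_neg, ← neg_smul]
  simp only [Function.comp_apply] at hneg
  rw [hJ, h, hneg, smul_smul, hk, ← fourier_add, sub_eq_add_neg]

theorem inner_fourierV_of_ne {k m : ℤ} (hkm : k ≠ m) (i j : ι) :
    ⟪fourierV ι k i, fourierV ι m j⟫_ℂ = 0 := by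
  have hscalar : ∫ x, conj (fourier k x) * fourier m x ∂μ𝕋 = 0 := by
    simp_rw [mul_comm (conj _)]
    rw [← ContinuousMap.inner_toLp, orthonormal_iff_ite.mp orthonormal_fourier k m, if_neg hkm]
  rw [L2.inner_def]
  calc ∫ x, ⟪fourierV ι k i x, fourierV ι m j x⟫_ℂ ∂μ𝕋
      = ∫ x, (conj (fourier k x) * fourier m x) * ⟪EuclideanSpace.single i (1 : ℂ),
          EuclideanSpace.single j (1 : ℂ)⟫_ℂ ∂μ𝕋 := by
        refine integral_congr_ae ?_
        filter_upwards [coeFn_fourierV k i, coeFn_fourierV m j] with x hk hm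
        rw [hk, hm, inner_smul_left, inner_smul_right, mul_assoc]
    _ = 0 := by rw [integral_mul_const, hscalar, zero_mul]

theorem fourierV_mem_hardy {m : ℤ} (hm : 0 ≤ m) (i : ι) : fourierV ι m i ∈ hardy ι := by
  -- `hardy ι` is defined through the monomials built with `Classical.decEq ι`.
  obtain rfl : ‹DecidableEq ι› = Classical.decEq ι := Subsingleton.elim _ _
  refine (isOrtho_span.mpr ?_) (mem_span_singleton_self _)
  rintro _ rfl _ ⟨k, hk, j, rfl⟩
  exact @inner_fourierV_of_ne _ _ (Classical.decEq ι) _ _ (by omega) i j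

theorem Jop_fourierV_mem_hardy {k : ℤ} (hk : k < 0) (i : ι) :
    Jop (V ι) (fourierV ι k i) ∈ hardy ι := by
  rw [Jop_fourierV]
  exact fourierV_mem_hardy (by omega) i

end Monomials

theorem Jop_mem_hardy_of_mem_orthogonal {u : L2 ι} (hu : u ∈ (hardy ι)ᗮ) :
    Jop (V ι) u ∈ hardy ι := by
  have hmaps : negSpan ι ≤ (hardy ι).comap (Jop (V ι) : L2 ι →ₗ[ℂ] L2 ι) := by
    refine span_le.mpr ?_
    rintro _ ⟨k, hk, j, rfl⟩
    rw [SetLike.mem_coe, mem_comap, ContinuousLinearMap.coe_coe]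
    exact @Jop_fourierV_mem_hardy _ _ (Classical.decEq ι) _ hk j
  rw [hardy, orthogonal_orthogonal_eq_closure] at hu
  exact topologicalClosure_minimal _ hmaps
    ((isClosed_orthogonal _).preimage (Jop (V ι)).continuous) hu

theorem Symbol.MemHinf.starProjection_orthogonal_mulLp_mul_apply {Θ : Symbol ι} (hΘ : Θ.MemHinf)
    (Φ : Symbol ι) (u : L2 ι) :
    (hardy ι)ᗮ.starProjection ((Θ.mul Φ).mulLp u)
      = (hardy ι)ᗮ.starProjection (Θ.mulLp ((hardy ι)ᗮ.starProjection (Φ.mulLp u))) := by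
  rw [Symbol.mulLp_mul_apply]
  conv_lhs => rw [← (hardy ι).starProjection_add_starProjection_orthogonal (Φ.mulLp u)]
  rw [map_add, map_add, starProjection_orthogonal_apply_eq_zero
    (hΘ _ (starProjection_apply_mem _ _)), zero_add]

theorem coe_hankel_apply (Φ : Symbol ι) (f : H2 ι) :
    (hankel Φ f : L2 ι) = Jop (V ι) ((hardy ι)ᗮ.starProjection (Φ.mulLp f)) := by
  rw [starProjection_orthogonal_val]
  exact (hardy ι).starProjection_eq_self_iff.mpr
    (Jop_mem_hardy_of_mem_orthogonal ((hardy ι).sub_starProjection_mem_orthogonal _))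

theorem inner_hankel_hankel (Φ Ψ : Symbol ι) (f g : H2 ι) :
    ⟪hankel Φ f, hankel Ψ g⟫_ℂ
      = ⟪(hardy ι)ᗮ.starProjection (Φ.mulLp f), (hardy ι)ᗮ.starProjection (Ψ.mulLp g)⟫_ℂ := by
  rw [coe_inner, coe_hankel_apply, coe_hankel_apply, inner_Jop_Jop]

theorem coe_adjoint_hankel_star_hankel_apply (Θ Φ : Symbol ι) (f : H2 ι) :
    (ContinuousLinearMap.adjoint (hankel Θ.star) (hankel Φ f) : L2 ι)
      = (hardy ι).starProjection (Θ.mulLp ((hardy ι)ᗮ.starProjection (Φ.mulLp f))) := by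
  suffices ContinuousLinearMap.adjoint (hankel Θ.star) (hankel Φ f)
      = hardyProj ι (Θ.mulLp ((hardy ι)ᗮ.starProjection (Φ.mulLp f))) by
    rw [this]; rfl
  refine ext_inner_right ℂ fun h => ?_
  rw [ContinuousLinearMap.adjoint_inner_left, inner_hankel_hankel,
    inner_starProjection_starProjection, hardyProj, inner_orthogonalProjectionOnto_eq_of_mem_right,
    Symbol.inner_mulLp_left]

end Hardy

/-- If `Θ ∈ H^∞_{M_n}` is inner and `Φ ∈ L^∞_{M_n}`, then
`H_Φ^* H_Φ - H_{ΘΦ}^* H_{ΘΦ} = H_Φ^* H_{Θ*} H_{Θ*}^* H_Φ`. -/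
theorem statement2 (ι : Type) [Fintype ι] (Θ Φ : Symbol ι) (hΘ : Θ.IsInner) :
    (ContinuousLinearMap.adjoint (hankel Φ)).comp (hankel Φ)
        - (ContinuousLinearMap.adjoint (hankel (Θ.mul Φ))).comp (hankel (Θ.mul Φ))
      = (ContinuousLinearMap.adjoint (hankel Φ)).comp
          ((hankel Θ.star).comp
            ((ContinuousLinearMap.adjoint (hankel Θ.star)).comp (hankel Φ))) := by
  refine ContinuousLinearMap.ext fun f => ext_inner_right ℂ fun g => ?_
  simp only [sub_apply, ContinuousLinearMap.comp_apply, inner_sub_left,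
    ContinuousLinearMap.adjoint_inner_left]
  rw [← ContinuousLinearMap.adjoint_inner_right (hankel Θ.star), inner_hankel_hankel,
    inner_hankel_hankel, coe_inner, coe_adjoint_hankel_star_hankel_apply,
    coe_adjoint_hankel_star_hankel_apply, hΘ.1.starProjection_orthogonal_mulLp_mul_apply,
    hΘ.1.starProjection_orthogonal_mulLp_mul_apply, ← hΘ.inner_mulLp_mulLp,
    ← (hardy ι).inner_starProjection_add_inner_starProjection_orthogonal, add_sub_cancel_right]

end BlockToeplitz
end
end

section
/- For inner functions θ₁, θ₂, θ₃ on 𝔻: if θ₁ · H(θ₂) ⊆ H(θ₃), then either θ₂ is constant or θ₁θ₂ divides θ₃. In particular, if θ₁ · H(θ₂) ⊆ H(θ₁), then θ₁ or θ₂ is constant. -/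
open MeasureTheory Complex Real InnerProductSpace Submodule

set_option maxHeartbeats 1000000
set_option synthInstance.maxHeartbeats 200000

noncomputable section

/-!
If `θ₂` is not constant, some coefficient `θ̂₂(n)` with `n ≥ 1` is nonzero. The backward shifts
`S*ᵏθ₂` (`k ≥ 1`) lie in `H(θ₂)`, so the hypothesis gives `S*ᵏθ₂ ⊥ θ̄₁θ₃H²`. Since
`S*ⁿ⁺¹θ₂ = z̄ (S*ⁿθ₂ - θ̂₂(n))` and `z̄` is adjoint to multiplication by `z`, the cases `k = n` and
`k = n + 1` show that `θ̄₁θ₃h` has no `z̄`-coefficient for every `h ∈ H²`; then `k = 1` shows the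
same for `θ̄₂θ̄₁θ₃h`. Replacing `h` by `zᵐh`, the bounded function `θ₀ := θ̄₂θ̄₁θ₃` maps `H²` into
`H²`; being unimodular it is inner, and `θ₃ = θ₁θ₂θ₀`. When `θ₃ = θ₁` we get `θ₀ = θ̄₂`, so both
`θ₂` and `θ̄₂` are analytic and `θ₂` is constant.
-/

namespace BlockToeplitz

open scoped ComplexConjugate

namespace SymbolS

theorem coeFn_mulLp (φ : SymbolS) (f : L2S) :
    (φ.mulLp f : 𝕋 → ℂ) =ᵐ[μ𝕋] fun x => φ.toFun x * f x := by
  unfold SymbolS.mulLp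
  rw [pointwiseCLM_apply]
  exact (MemLp.coeFn_toLp _).trans (.of_forall fun x => by simp)

theorem mulLp_comm (φ ψ : SymbolS) (f : L2S) :
    φ.mulLp (ψ.mulLp f) = ψ.mulLp (φ.mulLp f) := by
  refine Lp.ext ?_
  filter_upwards [φ.coeFn_mulLp (ψ.mulLp f), ψ.coeFn_mulLp f, ψ.coeFn_mulLp (φ.mulLp f),
    φ.coeFn_mulLp f] with x h1 h2 h3 h4
  rw [h1, h2, h3, h4, mul_left_comm]

theorem mul_mulLp (φ ψ : SymbolS) (f : L2S) :
    (φ.mul ψ).mulLp f = φ.mulLp (ψ.mulLp f) := by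
  refine Lp.ext ?_
  filter_upwards [(φ.mul ψ).coeFn_mulLp f, φ.coeFn_mulLp (ψ.mulLp f), ψ.coeFn_mulLp f]
    with x h1 h2 h3
  rw [h1, h2, h3, ← mul_assoc]
  rfl

theorem inner_mulLp_left (φ : SymbolS) (f g : L2S) :
    inner ℂ (φ.mulLp f) g = inner ℂ f (φ.conj.mulLp g) := by
  rw [L2.inner_def, L2.inner_def]
  refine integral_congr_ae ?_
  filter_upwards [φ.coeFn_mulLp f, φ.conj.coeFn_mulLp g] with x h1 h2
  rw [h1, h2, RCLike.inner_apply', RCLike.inner_apply', map_mul]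
  show conj (φ.toFun x) * conj (f x) * g x = conj (f x) * (conj (φ.toFun x) * g x)
  ring

theorem ae_conj_mul_self_eq_one {θ : SymbolS} (hθ : ∀ᵐ x ∂μ𝕋, ‖θ.toFun x‖ = 1) :
    ∀ᵐ x ∂μ𝕋, conj (θ.toFun x) * θ.toFun x = 1 :=
  hθ.mono fun x hx => by
    rw [← Complex.normSq_eq_conj_mul_self, Complex.normSq_eq_norm_sq, hx]
    norm_num

theorem conj_mulLp_mulLp {θ : SymbolS} (hθ : ∀ᵐ x ∂μ𝕋, ‖θ.toFun x‖ = 1) (f : L2S) :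
    θ.conj.mulLp (θ.mulLp f) = f := by
  refine Lp.ext ?_
  filter_upwards [θ.conj.coeFn_mulLp (θ.mulLp f), θ.coeFn_mulLp f, ae_conj_mul_self_eq_one hθ]
    with x h1 h2 h3
  rw [h1, h2, ← mul_assoc]
  exact (congrArg (· * f x) h3).trans (one_mul _)

end SymbolS

theorem fourierCoeff_fourier_mul (m k : ℤ) (f : 𝕋 → ℂ) :
    fourierCoeff (fun x => fourier m x * f x) k = fourierCoeff f (k - m) := by
  refine integral_congr_ae (.of_forall fun x => ?_)
  simp only [smul_eq_mul, ← mul_assoc, ← fourier_add]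
  ring_nf

theorem fourierCoeff_conj (f : 𝕋 → ℂ) (k : ℤ) :
    fourierCoeff (fun x => conj (f x)) k = conj (fourierCoeff f (-k)) := by
  rw [fourierCoeff, fourierCoeff, ← integral_conj]
  refine integral_congr_ae (.of_forall fun x => ?_)
  simp only [smul_eq_mul, map_mul, fourier_neg, Complex.conj_conj]

theorem fourierCoeff_shift_mulLp (f : L2S) (k : ℤ) :
    fourierCoeff (shiftSymbolS.mulLp f : 𝕋 → ℂ) k = fourierCoeff (f : 𝕋 → ℂ) (k - 1) := by
  rw [fourierCoeff_congr_ae (shiftSymbolS.coeFn_mulLp f)]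
  exact fourierCoeff_fourier_mul 1 k f

theorem fourierCoeff_coshift_mulLp (f : L2S) (k : ℤ) :
    fourierCoeff (coshiftSymbolS.mulLp f : 𝕋 → ℂ) k = fourierCoeff (f : 𝕋 → ℂ) (k + 1) := by
  rw [fourierCoeff_congr_ae (coshiftSymbolS.coeFn_mulLp f), ← sub_neg_eq_add]
  exact fourierCoeff_fourier_mul (-1) k f

theorem conj_coshift_mulLp (f : L2S) : coshiftSymbolS.conj.mulLp f = shiftSymbolS.mulLp f := by
  refine Lp.ext ?_
  filter_upwards [coshiftSymbolS.conj.coeFn_mulLp f, shiftSymbolS.coeFn_mulLp f] with x h1 h2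
  rw [h1, h2]
  show conj (fourier (-1) x) * f x = fourier 1 x * f x
  rw [fourier_neg, Complex.conj_conj]

theorem inner_fourierLp (k : ℤ) (f : L2S) :
    inner ℂ (fourierLp (T := 2 * π) 2 k : L2S) f = fourierCoeff (f : 𝕋 → ℂ) k := by
  rw [← fourierBasis_repr, HilbertBasis.repr_apply_apply, coe_fourierBasis]

theorem fourierCoeff_fourierLp (n : ℤ) :
    fourierCoeff (fourierLp (T := 2 * π) 2 n : 𝕋 → ℂ) = Pi.single n 1 := by
  rw [fourierCoeff_congr_ae (coeFn_fourierLp 2 n), fourierCoeff_fourier]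

theorem mem_hardyS_iff {f : L2S} :
    f ∈ hardyS ↔ ∀ k : ℤ, k < 0 → fourierCoeff (f : 𝕋 → ℂ) k = 0 := by
  refine ⟨fun hf k hk => ?_, fun h => (Submodule.mem_orthogonal negSpanS f).mpr fun u hu => ?_⟩
  · rw [← inner_fourierLp]
    exact (Submodule.mem_orthogonal negSpanS f).mp hf _ (Submodule.subset_span ⟨k, hk, rfl⟩)
  · induction hu using Submodule.span_induction with
    | mem u hu =>
      obtain ⟨k, hk, rfl⟩ := hu
      rw [inner_fourierLp, h k hk]
    | zero => exact inner_zero_left f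
    | add x y _ _ hx hy => rw [inner_add_left, hx, hy, add_zero]
    | smul c x _ hx => rw [inner_smul_left, hx, mul_zero]

theorem one_mem_hardyS : (fourierLp (T := 2 * π) 2 0 : L2S) ∈ hardyS :=
  mem_hardyS_iff.mpr fun k hk => by
    rw [fourierCoeff_fourierLp]
    exact Pi.single_eq_of_ne hk.ne _

theorem shift_mulLp_mem_hardyS {f : L2S} (hf : f ∈ hardyS) : shiftSymbolS.mulLp f ∈ hardyS :=
  mem_hardyS_iff.mpr fun k hk => by
    rw [fourierCoeff_shift_mulLp]
    exact mem_hardyS_iff.mp hf _ (by omega)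

theorem mem_orthogonal_rangeH2_iff {θ : SymbolS} {f : L2S} :
    f ∈ θ.rangeH2ᗮ ↔ ∀ h ∈ hardyS, inner ℂ f (θ.mulLp h) = 0 := by
  rw [Submodule.mem_orthogonal', SymbolS.rangeH2]
  exact ⟨fun hf h hh => hf _ (Submodule.mem_map_of_mem hh),
    fun hf _ ⟨h, hh, hu⟩ => hu ▸ hf h hh⟩

namespace SymbolS

def toL2 (θ : SymbolS) : L2S := θ.mulLp (fourierLp (T := 2 * π) 2 0)

theorem coeFn_toL2 (θ : SymbolS) : (θ.toL2 : 𝕋 → ℂ) =ᵐ[μ𝕋] θ.toFun := by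
  filter_upwards [θ.coeFn_mulLp _, coeFn_fourierLp (T := 2 * π) 2 0] with x h1 h2
  rw [toL2, h1, h2, fourier_zero, mul_one]

theorem inner_toL2_left (θ : SymbolS) (f : L2S) :
    inner ℂ θ.toL2 f = fourierCoeff (θ.conj.mulLp f : 𝕋 → ℂ) 0 := by
  rw [toL2, inner_mulLp_left, inner_fourierLp]

theorem MemHinf.toL2_mem_hardyS {θ : SymbolS} (hθ : θ.MemHinf) : θ.toL2 ∈ hardyS :=
  hθ _ one_mem_hardyS

theorem MemHinf.fourierCoeff_eq_zero {θ : SymbolS} (hθ : θ.MemHinf) {k : ℤ} (hk : k < 0) :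
    fourierCoeff θ.toFun k = 0 := by
  rw [← fourierCoeff_congr_ae θ.coeFn_toL2]
  exact mem_hardyS_iff.mp hθ.toL2_mem_hardyS k hk

theorem exists_ae_eq_const_of_fourierCoeff_eq_zero (θ : SymbolS)
    (h : ∀ k : ℤ, k ≠ 0 → fourierCoeff θ.toFun k = 0) :
    ∃ c : ℂ, ∀ᵐ x ∂μ𝕋, θ.toFun x = c := by
  rw [← fourierCoeff_congr_ae θ.coeFn_toL2] at h
  set c := fourierCoeff (θ.toL2 : 𝕋 → ℂ) 0
  have hsum : HasSum (fun k => fourierCoeff (θ.toL2 : 𝕋 → ℂ) k • fourierLp (T := 2 * π) 2 k)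
      (c • fourierLp (T := 2 * π) 2 0) :=
    hasSum_single 0 fun k hk => by rw [h k hk, zero_smul]
  have hθc : θ.toL2 = c • fourierLp (T := 2 * π) 2 0 :=
    (hasSum_fourier_series_L2 θ.toL2).unique hsum
  refine ⟨c, ?_⟩
  filter_upwards [θ.coeFn_toL2, Lp.coeFn_smul c (fourierLp (T := 2 * π) 2 0),
    coeFn_fourierLp (T := 2 * π) 2 0] with x h1 h2 h3
  rw [← h1, hθc, h2, Pi.smul_apply, h3, fourier_zero, smul_eq_mul, mul_one]

theorem MemHinf.exists_ae_eq_const {θ : SymbolS} (hθ : θ.MemHinf)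
    (h : ∀ n : ℕ, fourierCoeff θ.toFun (n + 1) = 0) : ∃ c : ℂ, ∀ᵐ x ∂μ𝕋, θ.toFun x = c := by
  refine θ.exists_ae_eq_const_of_fourierCoeff_eq_zero fun k hk => ?_
  rcases hk.lt_or_gt with hk | hk
  · exact hθ.fourierCoeff_eq_zero hk
  · have hk' : k = ((k - 1).toNat : ℕ) + 1 := by omega
    rw [hk']
    exact h _

theorem MemHinf.exists_ae_eq_const_of_conj {θ φ : SymbolS} (hθ : θ.MemHinf) (hφ : φ.MemHinf)
    (h : ∀ᵐ x ∂μ𝕋, φ.toFun x = conj (θ.toFun x)) : ∃ c : ℂ, ∀ᵐ x ∂μ𝕋, θ.toFun x = c := by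
  refine hθ.exists_ae_eq_const fun n => ?_
  have hθφ : θ.toFun =ᵐ[μ𝕋] fun x => conj (φ.toFun x) := by
    filter_upwards [h] with x hx
    rw [hx, Complex.conj_conj]
  rw [fourierCoeff_congr_ae hθφ, fourierCoeff_conj, hφ.fourierCoeff_eq_zero (by omega), map_zero]

theorem memHinf_of_fourierCoeff_neg_one (φ : SymbolS)
    (h : ∀ f ∈ hardyS, fourierCoeff (φ.mulLp f : 𝕋 → ℂ) (-1) = 0) : φ.MemHinf := by
  have hshift : ∀ m : ℕ, ∀ f ∈ hardyS, fourierCoeff (φ.mulLp f : 𝕋 → ℂ) (-1 - m) = 0 := by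
    intro m
    induction m with
    | zero => simpa using h
    | succ m ih =>
      intro f hf
      have := ih _ (shift_mulLp_mem_hardyS hf)
      rwa [mulLp_comm, fourierCoeff_shift_mulLp, show (-1 - m - 1 : ℤ) = -1 - (m + 1 : ℕ) by
        push_cast; ring] at this
  intro f hf
  refine mem_hardyS_iff.mpr fun k hk => ?_
  have hk' : k = -1 - ((-1 - k).toNat : ℕ) := by omega
  rw [hk']
  exact hshift _ f hf

end SymbolS

def backShift (f : L2S) : L2S :=
  coshiftSymbolS.mulLp (f - fourierCoeff (f : 𝕋 → ℂ) 0 • fourierLp (T := 2 * π) 2 0)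

theorem fourierCoeff_sub_fourierCoeff_zero (f : L2S) (k : ℤ) :
    fourierCoeff ((f - fourierCoeff (f : 𝕋 → ℂ) 0 • fourierLp (T := 2 * π) 2 0 : L2S) : 𝕋 → ℂ) k
      = if k = 0 then 0 else fourierCoeff (f : 𝕋 → ℂ) k := by
  rw [← inner_fourierLp, inner_sub_right, inner_smul_right, inner_fourierLp, inner_fourierLp,
    fourierCoeff_fourierLp]
  split_ifs with hk
  · simp [hk]
  · simp [Pi.single_eq_of_ne hk]

theorem fourierCoeff_backShift (f : L2S) {k : ℤ} (hk : 0 ≤ k) :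
    fourierCoeff (backShift f : 𝕋 → ℂ) k = fourierCoeff (f : 𝕋 → ℂ) (k + 1) := by
  rw [backShift, fourierCoeff_coshift_mulLp, fourierCoeff_sub_fourierCoeff_zero,
    if_neg (by omega)]

theorem fourierCoeff_iterate_backShift (f : L2S) (n : ℕ) {k : ℤ} (hk : 0 ≤ k) :
    fourierCoeff (backShift^[n] f : 𝕋 → ℂ) k = fourierCoeff (f : 𝕋 → ℂ) (k + n) := by
  induction n generalizing k with
  | zero => simp
  | succ n ih =>
    rw [Function.iterate_succ_apply', fourierCoeff_backShift _ hk, ih (by omega)]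
    push_cast
    ring_nf

theorem backShift_mem_hardyS {f : L2S} (hf : f ∈ hardyS) : backShift f ∈ hardyS := by
  refine mem_hardyS_iff.mpr fun k hk => ?_
  rw [backShift, fourierCoeff_coshift_mulLp, fourierCoeff_sub_fourierCoeff_zero]
  split_ifs with hk1
  · rfl
  · exact mem_hardyS_iff.mp hf _ (by omega)

theorem inner_backShift_left (f g : L2S) :
    inner ℂ (backShift f) g = inner ℂ f (shiftSymbolS.mulLp g)
      - conj (fourierCoeff (f : 𝕋 → ℂ) 0) * fourierCoeff (g : 𝕋 → ℂ) (-1) := by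
  rw [backShift, SymbolS.inner_mulLp_left, conj_coshift_mulLp, inner_sub_left, inner_smul_left,
    inner_fourierLp, fourierCoeff_shift_mulLp]
  norm_num

theorem backShift_mem_orthogonal_rangeH2 {θ : SymbolS} (hθ : θ.MemHinf) {f : L2S}
    (hf : f ∈ θ.rangeH2ᗮ) : backShift f ∈ θ.rangeH2ᗮ := by
  rw [mem_orthogonal_rangeH2_iff] at hf ⊢
  intro h hh
  rw [inner_backShift_left, SymbolS.mulLp_comm, hf _ (shift_mulLp_mem_hardyS hh),
    mem_hardyS_iff.mp (hθ h hh) (-1) (by norm_num), mul_zero, sub_zero]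

theorem backShift_mem_modelSpaceS {θ : SymbolS} (hθ : θ.MemHinf) {f : L2S}
    (hf : f ∈ modelSpaceS θ) : backShift f ∈ modelSpaceS θ :=
  ⟨backShift_mem_hardyS hf.1, backShift_mem_orthogonal_rangeH2 hθ hf.2⟩

theorem backShift_toL2_mem_modelSpaceS {θ : SymbolS} (hθ : θ.IsInner) :
    backShift θ.toL2 ∈ modelSpaceS θ := by
  refine ⟨backShift_mem_hardyS hθ.1.toL2_mem_hardyS, mem_orthogonal_rangeH2_iff.mpr ?_⟩
  intro h hh
  rw [inner_backShift_left, SymbolS.inner_toL2_left, SymbolS.mulLp_comm,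
    SymbolS.conj_mulLp_mulLp hθ.2, fourierCoeff_shift_mulLp, zero_sub,
    mem_hardyS_iff.mp hh (-1) (by norm_num), mem_hardyS_iff.mp (hθ.1 h hh) (-1) (by norm_num),
    mul_zero, sub_zero]

theorem iterate_backShift_toL2_mem_modelSpaceS {θ : SymbolS} (hθ : θ.IsInner) (n : ℕ) :
    backShift^[n + 1] θ.toL2 ∈ modelSpaceS θ := by
  induction n with
  | zero => exact backShift_toL2_mem_modelSpaceS hθ
  | succ n ih =>
    rw [Function.iterate_succ_apply']
    exact backShift_mem_modelSpaceS hθ.1 ih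

theorem fourierCoeff_mulLp_neg_one_eq_zero {ψ : SymbolS} {f : L2S} (hf : f ∈ ψ.rangeH2ᗮ)
    (hSf : backShift f ∈ ψ.rangeH2ᗮ) (hf0 : fourierCoeff (f : 𝕋 → ℂ) 0 ≠ 0) {h : L2S}
    (hh : h ∈ hardyS) : fourierCoeff (ψ.mulLp h : 𝕋 → ℂ) (-1) = 0 := by
  have hSfh := mem_orthogonal_rangeH2_iff.mp hSf h hh
  rw [inner_backShift_left, SymbolS.mulLp_comm,
    mem_orthogonal_rangeH2_iff.mp hf _ (shift_mulLp_mem_hardyS hh), zero_sub, neg_eq_zero] at hSfh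
  exact (mul_eq_zero.mp hSfh).resolve_left (by simpa using hf0)

theorem le_orthogonal_rangeH2_of_map_le {θ1 θ3 : SymbolS} {K : Submodule ℂ L2S}
    (hK : K.map (θ1.mulLp : L2S →ₗ[ℂ] L2S) ≤ θ3.rangeH2ᗮ) :
    K ≤ (θ1.conj.mul θ3).rangeH2ᗮ := by
  intro f hf
  refine mem_orthogonal_rangeH2_iff.mpr fun h hh => ?_
  rw [SymbolS.mul_mulLp, ← SymbolS.inner_mulLp_left]
  exact mem_orthogonal_rangeH2_iff.mp (hK (Submodule.mem_map_of_mem hf)) h hh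

theorem memHinf_conj_mul_conj_mul {θ1 θ2 θ3 : SymbolS} (h2 : θ2.IsInner) {n : ℕ}
    (hn : fourierCoeff θ2.toFun (n + 1) ≠ 0)
    (hK : (modelSpaceS θ2).map (θ1.mulLp : L2S →ₗ[ℂ] L2S) ≤ θ3.rangeH2ᗮ) :
    (θ2.conj.mul (θ1.conj.mul θ3)).MemHinf := by
  set ψ := θ1.conj.mul θ3
  have hK' := le_orthogonal_rangeH2_of_map_le hK
  have hψ : ∀ h ∈ hardyS, fourierCoeff (ψ.mulLp h : 𝕋 → ℂ) (-1) = 0 := by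
    refine fun h hh => fourierCoeff_mulLp_neg_one_eq_zero
      (hK' (iterate_backShift_toL2_mem_modelSpaceS h2 n)) ?_ ?_ hh
    · rw [← Function.iterate_succ_apply' backShift]
      exact hK' (iterate_backShift_toL2_mem_modelSpaceS h2 (n + 1))
    · rw [fourierCoeff_iterate_backShift _ _ le_rfl, fourierCoeff_congr_ae θ2.coeFn_toL2]
      simpa using hn
  refine SymbolS.memHinf_of_fourierCoeff_neg_one _ fun h hh => ?_
  have h0 := mem_orthogonal_rangeH2_iff.mp (hK' (backShift_toL2_mem_modelSpaceS h2)) h hh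
  rwa [inner_backShift_left, hψ h hh, mul_zero, sub_zero, SymbolS.inner_toL2_left,
    SymbolS.mulLp_comm, fourierCoeff_shift_mulLp, zero_sub, ← SymbolS.mul_mulLp] at h0

/-- **Statement 15.** For inner functions `θ₁, θ₂, θ₃`: if `θ₁·H(θ₂) ⊆ H(θ₃)` then either
`θ₂` is constant or `θ₁θ₂` divides `θ₃`; in particular if `θ₁·H(θ₂) ⊆ H(θ₁)` then `θ₁` or
`θ₂` is constant. -/
theorem statement15 (θ1 θ2 θ3 : SymbolS) (h1 : θ1.IsInner) (h2 : θ2.IsInner)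
    (h3 : θ3.IsInner) :
    (Submodule.map (θ1.mulLp : L2S →ₗ[ℂ] L2S) (modelSpaceS θ2) ≤ modelSpaceS θ3 →
      (∃ c : ℂ, ∀ᵐ x ∂μ𝕋, θ2.toFun x = c) ∨
        ∃ θ0 : SymbolS, θ0.IsInner ∧
          ∀ᵐ x ∂μ𝕋, θ3.toFun x = θ1.toFun x * θ2.toFun x * θ0.toFun x) ∧
    (Submodule.map (θ1.mulLp : L2S →ₗ[ℂ] L2S) (modelSpaceS θ2) ≤ modelSpaceS θ1 →
      (∃ c : ℂ, ∀ᵐ x ∂μ𝕋, θ1.toFun x = c) ∨ ∃ c : ℂ, ∀ᵐ x ∂μ𝕋, θ2.toFun x = c) := by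
  by_cases hconst : ∀ n : ℕ, fourierCoeff θ2.toFun (n + 1) = 0
  · have hθ2 := h2.1.exists_ae_eq_const hconst
    exact ⟨fun _ => .inl hθ2, fun _ => .inr hθ2⟩
  obtain ⟨n, hn⟩ := not_forall.mp hconst
  have e1 := SymbolS.ae_conj_mul_self_eq_one h1.2
  have e2 := SymbolS.ae_conj_mul_self_eq_one h2.2
  refine ⟨fun hyp => .inr ⟨_, ⟨memHinf_conj_mul_conj_mul h2 hn (hyp.trans inf_le_right), ?_⟩, ?_⟩,
    fun hyp => .inr <| h2.1.exists_ae_eq_const_of_conj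
      (memHinf_conj_mul_conj_mul h2 hn (hyp.trans inf_le_right)) ?_⟩
  · filter_upwards [h1.2, h2.2, h3.2] with x n1 n2 n3
    simp [SymbolS.mul, SymbolS.conj, n1, n2, n3]
  · filter_upwards [e1, e2] with x e1 e2
    show _ = _ * _ * (conj (θ2.toFun x) * (conj (θ1.toFun x) * θ3.toFun x))
    linear_combination (-θ3.toFun x) * (e2 + conj (θ2.toFun x) * θ2.toFun x * e1)
  · filter_upwards [e1] with x e1
    show conj (θ2.toFun x) * (conj (θ1.toFun x) * θ1.toFun x) = _
    rw [e1, mul_one]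

end BlockToeplitz
end
end
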